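/- arXiv:1704.03011 — 4 statements merged into one kernel-verified Lean document; each statement's English description precedes it below -/
import Mathlib

section
/- Let h > 0, p ≤ 0, q ≥ 0 with -p ≥ q, and let γ ≤ 0 be the unique real solution of γ - p = q e^{-hγ}. For each ζ ∈ ℝ let λ(ζ) be the unique real solution of λ = -ζ² + p + q e^{-hλ}. Set ε_h = 1/(1 + h(γ - p)). Then for all ζ ∈ ℝ: -ε_h ζ² + γ ≤ λ(ζ) ≤ γ - (1/h)·log(1 + h ε_h ζ²). -/
/-! Both bounds come from comparing `λ(ζ)` with explicit sub- and supersolutions of the fixed-point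
equation `x = c + q e^{-hx}`, whose right-hand side is non-increasing in `x`. Using `q e^{-hγ} = γ - p`,
the candidates `γ - ε_h ζ²` and `γ - h⁻¹ log (1 + h ε_h ζ²)` reduce this to `1 + x ≤ eˣ` and
`log (1 + x) ≤ x` respectively, the choice of `ε_h` making the linear terms cancel exactly. -/

open Real

section FixedPointComparison

variable {h q c L : ℝ}

theorem le_of_le_add_mul_exp (hh : 0 ≤ h) (hq : 0 ≤ q) (hL : L = c + q * exp (-h * L)) {a : ℝ}
    (ha : a ≤ c + q * exp (-h * a)) : a ≤ L := by
  by_contra! hLa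
  have : exp (-h * a) ≤ exp (-h * L) := exp_le_exp.mpr (by nlinarith)
  nlinarith [mul_le_mul_of_nonneg_left this hq]

theorem le_of_add_mul_exp_le (hh : 0 ≤ h) (hq : 0 ≤ q) (hL : L = c + q * exp (-h * L)) {b : ℝ}
    (hb : c + q * exp (-h * b) ≤ b) : L ≤ b := by
  by_contra! hbL
  have : exp (-h * L) ≤ exp (-h * b) := exp_le_exp.mpr (by nlinarith)
  nlinarith [mul_le_mul_of_nonneg_left this hq]

end FixedPointComparison

theorem one_div_mul_log_one_add_mul_le {h t : ℝ} (hh : 0 < h) (ht : 0 < 1 + h * t) :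
    1 / h * log (1 + h * t) ≤ t := by
  rw [one_div_mul_eq_div, div_le_iff₀ hh]
  linarith [log_le_sub_one_of_pos ht]

theorem exp_neg_mul_sub_one_div_mul_log {h y : ℝ} (hh : h ≠ 0) (hy : 0 < y) (γ : ℝ) :
    exp (-h * (γ - 1 / h * log y)) = exp (-h * γ) * y := by
  rw [← exp_log hy, ← exp_add, exp_log hy]
  congr 1
  field_simp
  ring

theorem stmt5_general (h p q γ : ℝ) (hh : 0 < h) (hq : 0 ≤ q)
    (hγeq : γ - p = q * Real.exp (-h * γ))
    (lam : ℝ → ℝ) (hlam : ∀ ζ, lam ζ = -ζ^2 + p + q * Real.exp (-h * lam ζ)) :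
    ∀ ζ : ℝ,
      -(1 / (1 + h * (γ - p))) * ζ^2 + γ ≤ lam ζ ∧
      lam ζ ≤ γ - (1 / h) * Real.log (1 + h * (1 / (1 + h * (γ - p))) * ζ^2) := by
  intro ζ
  have hγp : 0 ≤ γ - p := hγeq ▸ by positivity
  have hD : 0 < 1 + h * (γ - p) := by positivity
  set ε := 1 / (1 + h * (γ - p))
  have hε : 0 < ε := by positivity
  have hlin : -ζ ^ 2 + p + (γ - p) * (1 + h * ε * ζ ^ 2) = -ε * ζ ^ 2 + γ := by
    simp only [ε]; field_simp [hD.ne']; ring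
  constructor
  · refine le_of_le_add_mul_exp hh.le hq (hlam ζ) ?_
    calc -ε * ζ ^ 2 + γ = -ζ ^ 2 + p + (γ - p) * (1 + h * ε * ζ ^ 2) := hlin.symm
      _ ≤ -ζ ^ 2 + p + (γ - p) * exp (h * ε * ζ ^ 2) := by
        gcongr
        linarith [add_one_le_exp (h * ε * ζ ^ 2)]
      _ = -ζ ^ 2 + p + q * exp (-h * (-ε * ζ ^ 2 + γ)) := by
        rw [hγeq, mul_assoc, ← exp_add]; ring_nf
  · have hpos : 0 < 1 + h * ε * ζ ^ 2 := by positivity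
    refine le_of_add_mul_exp_le hh.le hq (hlam ζ) ?_
    calc -ζ ^ 2 + p + q * exp (-h * (γ - 1 / h * log (1 + h * ε * ζ ^ 2)))
        = -ε * ζ ^ 2 + γ := by
          rw [exp_neg_mul_sub_one_div_mul_log hh.ne' hpos, ← mul_assoc, ← hγeq, hlin]
      _ ≤ γ - 1 / h * log (1 + h * ε * ζ ^ 2) := by
        have := one_div_mul_log_one_add_mul_le hh (t := ε * ζ ^ 2) (by rwa [← mul_assoc])
        rw [← mul_assoc] at this
        linarith

theorem stmt5 (h p q γ : ℝ) (hh : 0 < h) (hp : p ≤ 0) (hq : 0 ≤ q) (hpq : q ≤ -p)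
    (hγ : γ ≤ 0) (hγeq : γ - p = q * Real.exp (-h * γ))
    (lam : ℝ → ℝ) (hlam : ∀ ζ, lam ζ = -ζ^2 + p + q * Real.exp (-h * lam ζ)) :
    ∀ ζ : ℝ,
      -(1 / (1 + h * (γ - p))) * ζ^2 + γ ≤ lam ζ ∧
      lam ζ ≤ γ - (1 / h) * Real.log (1 + h * (1 / (1 + h * (γ - p))) * ζ^2) :=
  stmt5_general h p q γ hh hq hγeq lam hlam
end

section
/- Let h > 0, p ∈ ℝ, q > 0, and for each ζ ∈ ℝ let λ(ζ) be the unique real solution of λ = -ζ² + p + q e^{-hλ}. Then λ(ζ)/log(ζ) → -2/h as ζ → ∞. -/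
/-!
Put `u = λ + ζ² - p`, so that `u = q e^{-hλ}` and `hλ = log q - log u`. Since
`u = q e^{h (ζ² - p - u)}`, the value `u` can neither exceed `max q (ζ² - p)` nor drop below
`(ζ² - p) / 2` (the right-hand side would then be exponentially large in `ζ²`). Hence
`u` is comparable to `ζ²`, so `hλ = -2 log ζ + O(1)`, and dividing by `log ζ → ∞` gives the limit.
-/

open Filter Real

/-- The equation for `λ(ζ)`, with `w` standing for `ζ² - p`. -/
def IsCharRoot (h q w l : ℝ) : Prop :=
  l = -w + q * exp (-h * l)

namespace IsCharRoot

variable {h q w l : ℝ}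

theorem add_eq (hl : IsCharRoot h q w l) : l + w = q * exp (-h * l) := by
  unfold IsCharRoot at hl
  linarith

theorem mul_eq_log_sub_log (hq : 0 < q) (hl : IsCharRoot h q w l) :
    h * l = log q - log (l + w) := by
  rw [hl.add_eq, log_mul hq.ne' (exp_pos _).ne', log_exp]
  ring

theorem add_le_max (hh : 0 < h) (hq : 0 < q) (hl : IsCharRoot h q w l) : l + w ≤ max q w := by
  by_contra! hlt
  have hpos : 0 < l := by linarith [le_max_right q w]
  have : q * exp (-h * l) < q :=
    mul_lt_of_lt_one_right hq (exp_lt_one_iff.mpr (by nlinarith))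
  linarith [le_max_left q w, hl.add_eq]

theorem half_le_add (hh : 0 < h) (hq : 0 < q) (hl : IsCharRoot h q w l)
    (hw : w / 2 ≤ q * exp (h * (w / 2))) : w / 2 ≤ l + w := by
  by_contra! hlt
  have : exp (h * (w / 2)) < exp (-h * l) := exp_lt_exp.mpr (by nlinarith)
  linarith [mul_lt_mul_of_pos_left this hq, hl.add_eq]

end IsCharRoot

theorem eventually_half_le_mul_exp {h q : ℝ} (hh : 0 < h) (hq : 0 < q) :
    ∀ᶠ t in atTop, t / 2 ≤ q * exp (h * (t / 2)) := by
  have hbound := (isLittleO_pow_exp_pos_mul_atTop 1 (half_pos hh)).def (mul_pos two_pos hq)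
  filter_upwards [hbound] with t ht
  simp only [pow_one, norm_eq_abs, abs_of_pos (exp_pos _)] at ht
  have : h / 2 * t = h * (t / 2) := by ring
  rw [this] at ht
  linarith [le_abs_self t]

theorem abs_log_sub_log_le {x y c : ℝ} (hx : 0 < x) (hc : 0 < c) (hlow : x / c ≤ y)
    (hup : y ≤ c * x) : |log y - log x| ≤ log c := by
  have hy : 0 < y := (div_pos hx hc).trans_le hlow
  have h1 := log_le_log hy hup
  have h2 := log_le_log (div_pos hx hc) hlow
  rw [log_mul hc.ne' hx.ne'] at h1
  rw [log_div hx.ne' hc.ne'] at h2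
  exact abs_sub_le_iff.mpr ⟨by linarith, by linarith⟩

theorem tendsto_div_of_abs_sub_mul_le {α : Type*} {l : Filter α} {f g : α → ℝ} {c C : ℝ}
    (hg : Tendsto g l atTop) (hfg : ∀ᶠ x in l, |f x - c * g x| ≤ C) :
    Tendsto (fun x => f x / g x) l (nhds c) := by
  have hsmall : Tendsto (fun x => (f x - c * g x) / g x) l (nhds 0) := by
    refine squeeze_zero_norm' ?_ (by simpa using (tendsto_inv_atTop_zero.comp hg).const_mul C)
    filter_upwards [hfg, hg.eventually_gt_atTop 0] with x hx hgx
    rw [norm_eq_abs, abs_div, abs_of_pos hgx, div_eq_mul_inv]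
    exact mul_le_mul_of_nonneg_right hx (inv_nonneg.mpr hgx.le)
  refine (by simpa using hsmall.const_add c : Tendsto _ l _).congr' ?_
  filter_upwards [hg.eventually_gt_atTop 0] with x hgx
  field_simp
  ring

theorem stmt6 (h p q : ℝ) (hh : 0 < h) (hq : 0 < q)
    (lam : ℝ → ℝ) (hlam : ∀ ζ, lam ζ = -ζ^2 + p + q * Real.exp (-h * lam ζ)) :
    Tendsto (fun ζ => lam ζ / Real.log ζ) atTop (nhds (-2 / h)) := by
  have hroot : ∀ ζ, IsCharRoot h q (ζ ^ 2 - p) (lam ζ) := fun ζ => by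
    unfold IsCharRoot; linarith [hlam ζ]
  have hw : Tendsto (fun ζ : ℝ => ζ ^ 2 - p) atTop atTop :=
    tendsto_atTop_add_const_right _ _ (tendsto_pow_atTop two_ne_zero)
  refine tendsto_div_of_abs_sub_mul_le tendsto_log_atTop (C := (|log q| + log 4) / h) ?_
  filter_upwards [hw.eventually (eventually_half_le_mul_exp hh hq), hw.eventually_ge_atTop q,
    eventually_gt_atTop 0, eventually_ge_atTop (2 * |p| + 2)] with ζ hexp hqw hζ hp
  have hζ2 : 4 * |p| ≤ ζ ^ 2 := by nlinarith [abs_nonneg p]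
  have hcomp : |log (lam ζ + (ζ ^ 2 - p)) - log (ζ ^ 2)| ≤ log 4 := by
    refine abs_log_sub_log_le (by positivity) four_pos ?_ ?_
    · linarith [(hroot ζ).half_le_add hh hq hexp, le_abs_self p]
    · linarith [(hroot ζ).add_le_max hh hq, max_eq_right hqw, neg_abs_le p]
  have hlog := (hroot ζ).mul_eq_log_sub_log hq
  rw [log_pow, Nat.cast_ofNat] at hcomp
  rw [le_div_iff₀ hh, ← abs_of_pos hh, ← abs_mul, abs_of_pos hh]
  calc |(lam ζ - -2 / h * log ζ) * h| = |log q - (log (lam ζ + (ζ ^ 2 - p)) - 2 * log ζ)| := by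
        congr 1; field_simp; linarith
    _ ≤ |log q| + log 4 := (abs_sub _ _).trans (by linarith)
end

section
/- Let h > 0, p ∈ ℝ, q > 0, and for each ζ ∈ ℝ let λ(ζ) be the unique real solution of λ = -ζ² + p + q e^{-hλ}. Then lim_{ζ → ∞} e^{-h λ(ζ)}/ζ² = 1/q. -/
/-!
Writing `x = -h λ`, the equation says `q eˣ = λ + ζ² - p`. Once `ζ²` is large, `λ < 0`, so
`q eˣ < ζ² - p`; since `eˣ ≥ x²/2`, this forces `λ = O(ζ)`, hence `λ / ζ² → 0`, and then
`eˣ / ζ² = (λ / ζ² + 1 - p / ζ²) / q → 1 / q`.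
-/

open Filter Topology Real

namespace DelayedRoot

theorem neg_of_lt {h p q s L : ℝ} (hh : 0 ≤ h) (hq : 0 ≤ q)
    (hL : L = -s + p + q * exp (-h * L)) (hs : p + q < s) : L < 0 := by
  by_contra! hL0
  have : exp (-h * L) ≤ 1 := exp_le_one_iff.mpr (by nlinarith)
  nlinarith

theorem mul_sq_lt_two_mul_sub {h p q s L : ℝ} (hh : 0 ≤ h) (hq : 0 < q)
    (hL : L = -s + p + q * exp (-h * L)) (hL0 : L < 0) : q * (h * L) ^ 2 < 2 * (s - p) := by
  have hx : 0 ≤ -h * L := by nlinarith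
  have := mul_le_mul_of_nonneg_left (quadratic_le_exp_of_nonneg hx) hq.le
  nlinarith

variable {α : Type*} {l : Filter α} {h p q : ℝ} {s L : α → ℝ}

theorem tendsto_div_nhds_zero (hs : Tendsto s l atTop) (hh : 0 < h) (hq : 0 < q)
    (hL : ∀ a, L a = -s a + p + q * exp (-h * L a)) :
    Tendsto (fun a => L a / s a) l (𝓝 0) := by
  have hinv : Tendsto (fun a => (s a)⁻¹) l (𝓝 0) := tendsto_inv_atTop_zero.comp hs
  have hbound : Tendsto (fun a => 2 / (q * h ^ 2) * ((s a)⁻¹ - p * (s a)⁻¹ ^ 2)) l (𝓝 0) := by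
    simpa using (hinv.sub ((hinv.pow 2).const_mul p)).const_mul (2 / (q * h ^ 2))
  have hsq : Tendsto (fun a => (L a / s a) ^ 2) l (𝓝 0) := by
    refine tendsto_of_tendsto_of_tendsto_of_le_of_le' tendsto_const_nhds hbound
      (Eventually.of_forall fun a => sq_nonneg _) ?_
    filter_upwards [hs.eventually_gt_atTop (max (p + q) 0)] with a ha
    have hsa : 0 < s a := (le_max_right _ _).trans_lt ha
    have hLa := neg_of_lt hh.le hq.le (hL a) ((le_max_left _ _).trans_lt ha)
    have key := mul_sq_lt_two_mul_sub hh.le hq (hL a) hLa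
    rw [div_pow, div_le_iff₀ (by positivity)]
    field_simp
    nlinarith
  refine (tendsto_zero_iff_abs_tendsto_zero _).mpr ?_
  simpa only [Function.comp_def, sqrt_sq_eq_abs, sqrt_zero] using hsq.sqrt

theorem tendsto_exp_div (hs : Tendsto s l atTop) (hh : 0 < h) (hq : 0 < q)
    (hL : ∀ a, L a = -s a + p + q * exp (-h * L a)) :
    Tendsto (fun a => exp (-h * L a) / s a) l (𝓝 (1 / q)) := by
  have hlim := (((tendsto_div_nhds_zero hs hh hq hL).add_const 1).sub
    (tendsto_const_nhds.div_atTop hs : Tendsto (fun a => p / s a) l (𝓝 0))).div_const q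
  rw [zero_add, sub_zero] at hlim
  refine hlim.congr' ?_
  filter_upwards [hs.eventually_ne_atTop 0] with a ha
  have hE : L a + s a - p = q * exp (-h * L a) := by linarith [hL a]
  field_simp
  rw [hE]
  ring_nf

end DelayedRoot

theorem stmt8 (h p q : ℝ) (hh : 0 < h) (hq : 0 < q)
    (lam : ℝ → ℝ) (hlam : ∀ ζ, lam ζ = -ζ^2 + p + q * Real.exp (-h * lam ζ)) :
    Tendsto (fun ζ => Real.exp (-h * lam ζ) / ζ^2) atTop (nhds (1 / q)) :=
  DelayedRoot.tendsto_exp_div (tendsto_pow_atTop two_ne_zero) hh hq hlam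
end

section
/- Let L > 1 and h > 0. For c > 0 define E_c(λ) = -λ² + cλ + 1 - L e^{-λ c h}. Then the set {c > 0 : ∃ λ₀ ∈ ℝ, E_c(λ₀) ≥ 0} is nonempty, and its infimum c(L) is positive. -/
/-!
For `λ ≤ 0` the delay term `L e^{-λch} ≥ L > 1` makes `E_c(λ) < 0`, so any root-witness `λ` is
positive. Bounding the exponential by its tangent line, `e^{-λch} ≥ 1 - λch`, turns `E_c(λ) ≥ 0`
into `λ² + (L - 1) ≤ cλ(1 + Lh)`, and AM-GM `2√(L-1) λ ≤ λ² + (L - 1)` gives the uniform lower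
bound `c ≥ 2√(L-1) / (1 + Lh) > 0`. The speed `c = L` is admissible with `λ = 1`.
-/

open Real

/-- The characteristic function `E_c(λ)`. -/
noncomputable def charFun (L h c l : ℝ) : ℝ :=
  -l ^ 2 + c * l + 1 - L * exp (-l * c * h)

def admissibleSpeeds (L h : ℝ) : Set ℝ :=
  {c | 0 < c ∧ ∃ l, 0 ≤ charFun L h c l}

section

variable {L h c l : ℝ}

theorem self_mem_admissibleSpeeds (hL : 0 < L) (hh : 0 ≤ h) : L ∈ admissibleSpeeds L h := by
  refine ⟨hL, 1, ?_⟩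
  have : exp (-1 * L * h) ≤ 1 := exp_le_one_iff.mpr (by nlinarith)
  unfold charFun
  nlinarith

theorem pos_of_charFun_nonneg (hL : 1 < L) (hc : 0 ≤ c) (hh : 0 ≤ h)
    (hE : 0 ≤ charFun L h c l) : 0 < l := by
  by_contra! hl
  have : 1 ≤ exp (-l * c * h) := one_le_exp (mul_nonneg (mul_nonneg (neg_nonneg.mpr hl) hc) hh)
  unfold charFun at hE
  nlinarith [mul_nonpos_of_nonneg_of_nonpos hc hl]

theorem charFun_le_quadratic (hL : 0 ≤ L) :
    charFun L h c l ≤ -l ^ 2 + c * l * (1 + L * h) + 1 - L := by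
  have := mul_le_mul_of_nonneg_left (add_one_le_exp (-l * c * h)) hL
  unfold charFun
  linarith

theorem two_sqrt_le_of_charFun_nonneg (hL : 1 < L) (hc : 0 ≤ c) (hh : 0 ≤ h)
    (hE : 0 ≤ charFun L h c l) : 2 * √(L - 1) ≤ c * (1 + L * h) := by
  have hl := pos_of_charFun_nonneg hL hc hh hE
  have hquad : l ^ 2 + (L - 1) ≤ c * (1 + L * h) * l := by
    nlinarith [charFun_le_quadratic (h := h) (c := c) (l := l) (by linarith : 0 ≤ L)]
  have hamgm : 2 * √(L - 1) * l ≤ l ^ 2 + (L - 1) := by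
    nlinarith [sq_nonneg (l - √(L - 1)), sq_sqrt (by linarith : 0 ≤ L - 1)]
  exact le_of_mul_le_mul_right (hamgm.trans hquad) hl

theorem div_le_of_mem_admissibleSpeeds (hL : 1 < L) (hh : 0 ≤ h) (hc : c ∈ admissibleSpeeds L h) :
    2 * √(L - 1) / (1 + L * h) ≤ c := by
  obtain ⟨hc, l, hE⟩ := hc
  rw [div_le_iff₀ (by nlinarith)]
  exact two_sqrt_le_of_charFun_nonneg hL hc.le hh hE

end

theorem stmt12 (L h : ℝ) (hL : 1 < L) (hh : 0 < h) :
    {c : ℝ | 0 < c ∧ ∃ l : ℝ, 0 ≤ -l^2 + c * l + 1 - L * Real.exp (-l * c * h)}.Nonempty ∧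
    0 < sInf {c : ℝ | 0 < c ∧ ∃ l : ℝ, 0 ≤ -l^2 + c * l + 1 - L * Real.exp (-l * c * h)} := by
  change (admissibleSpeeds L h).Nonempty ∧ 0 < sInf (admissibleSpeeds L h)
  have hne : (admissibleSpeeds L h).Nonempty :=
    ⟨L, self_mem_admissibleSpeeds (by linarith) hh.le⟩
  have hbound : 0 < 2 * √(L - 1) / (1 + L * h) := by
    have : 0 < √(L - 1) := sqrt_pos.mpr (by linarith)
    have : 0 < 1 + L * h := by nlinarith
    positivity
  exact ⟨hne, hbound.trans_le
    (le_csInf hne fun _ hc => div_le_of_mem_admissibleSpeeds hL hh.le hc)⟩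
end
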